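/- arXiv:0710.5854 — 6 statements merged into one kernel-verified Lean document; each statement's English description precedes it below -/
import Mathlib

section
/- Let P, Q, R be nonnegative m×m matrices with (P+Q+R)·1 = 1. Suppose there are ε > 0 and an integer l ≥ 1 with ‖R^l‖ ≤ 1 - ε, and every entry of (I-R)^{-1}P and of (I-R)^{-1}Q is at least ε. Then for any stochastic m×m matrix ψ, the norm ‖(I - R - Qψ)^{-1}‖ is bounded by a constant C depending only on ε, l, and m. -/
/-!
Since `‖R ^ l‖ ≤ 1 - ε`, the matrix `1 - R ^ l` is invertible with inverse of norm at most `ε⁻¹`,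
so `(1 - R)⁻¹ = (∑_{i<l} R ^ i) (1 - R ^ l)⁻¹` has norm at most `l / ε`. Writing
`1 - R - Qψ = (1 - R)(1 - (1 - R)⁻¹ Q ψ)`, it remains to see that `‖(1 - R)⁻¹ Q ψ‖ ≤ 1 - ε`:
the rows of `(1 - R)⁻¹ (P + Q)` sum to `1`, so each row of the nonnegative matrix `(1 - R)⁻¹ Q`
sums to at most `1 - ((1 - R)⁻¹ P) i i ≤ 1 - ε`, and `‖ψ‖ = 1`.
-/

open Matrix BigOperators

noncomputable def rowNorm {m : ℕ} (A : Matrix (Fin m) (Fin m) ℝ) : ℝ :=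
  ⨆ i, ∑ j, |A i j|

def IsStochastic {m : ℕ} (S : Matrix (Fin m) (Fin m) ℝ) : Prop :=
  (∀ i j, 0 ≤ S i j) ∧ S *ᵥ (fun _ => (1 : ℝ)) = fun _ => (1 : ℝ)

open Finset

attribute [local instance] Matrix.linftyOpNormedRing Matrix.linftyOpNormedAlgebra

theorem norm_geom_sum_le_of_norm_le_one {A : Type*} [SeminormedRing A] [NormOneClass A] {x : A}
    (hx : ‖x‖ ≤ 1) (l : ℕ) : ‖∑ i ∈ range l, x ^ i‖ ≤ l :=
  calc ‖∑ i ∈ range l, x ^ i‖ ≤ ∑ i ∈ range l, ‖x ^ i‖ := norm_sum_le _ _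
    _ ≤ ∑ _i ∈ range l, (1 : ℝ) :=
        sum_le_sum fun i _ => (norm_pow_le x i).trans (pow_le_one₀ (norm_nonneg x) hx)
    _ = l := by simp

namespace Matrix

theorem mulVec_one_apply {m n α : Type*} [Fintype n] [NonAssocSemiring α] (A : Matrix m n α)
    (i : m) : (A *ᵥ 1) i = ∑ j, A i j := by
  simp [mulVec, dotProduct]

section CommRing

variable {n K : Type*} [Fintype n] [DecidableEq n] [CommRing K]

theorem isUnit_one_sub_of_isUnit_one_sub_pow {R : Matrix n n K} {l : ℕ}
    (h : IsUnit (1 - R ^ l)) : IsUnit (1 - R) := by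
  rw [← mul_neg_geom_sum] at h
  exact isUnit_of_mul_isUnit_left h

theorem inv_one_sub_eq_geom_sum_mul {R : Matrix n n K} {l : ℕ} (h : IsUnit (1 - R ^ l)) :
    (1 - R)⁻¹ = (∑ i ∈ range l, R ^ i) * (1 - R ^ l)⁻¹ :=
  inv_eq_right_inv <| by
    rw [← mul_assoc, mul_neg_geom_sum, mul_nonsing_inv _ ((isUnit_iff_isUnit_det _).1 h)]

theorem one_sub_sub_eq_one_sub_mul {R : Matrix n n K} (h : IsUnit (1 - R)) (X : Matrix n n K) :
    1 - R - X = (1 - R) * (1 - (1 - R)⁻¹ * X) := by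
  rw [mul_sub, mul_one, ← mul_assoc, mul_nonsing_inv _ ((isUnit_iff_isUnit_det _).1 h), one_mul,
    sub_sub]

theorem inv_one_sub_mul_add_mulVec_one {P Q R : Matrix n n K} (h : IsUnit (1 - R))
    (hsum : (P + Q + R) *ᵥ 1 = 1) : ((1 - R)⁻¹ * (P + Q)) *ᵥ 1 = 1 := by
  have hPQ : (P + Q) *ᵥ 1 = (1 - R) *ᵥ 1 := by
    rw [sub_mulVec, one_mulVec, eq_sub_iff_add_eq, ← add_mulVec, hsum]
  rw [← mulVec_mulVec, hPQ, mulVec_mulVec, nonsing_inv_mul _ ((isUnit_iff_isUnit_det _).1 h),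
    one_mulVec]

end CommRing

section Norm

variable {n : Type*} [Fintype n] [DecidableEq n] [Nonempty n]

theorem linfty_opNorm_le_of_nonneg {A : Matrix n n ℝ} {c : ℝ} (hA : ∀ i j, 0 ≤ A i j)
    (hrow : ∀ i, (A *ᵥ 1) i ≤ c) : ‖A‖ ≤ c := by
  have hrow' : ∀ i, ∑ j, |A i j| ≤ c := fun i => by
    simpa [mulVec_one_apply, abs_of_nonneg (hA i _)] using hrow i
  have hc : 0 ≤ c := (sum_nonneg fun j _ => abs_nonneg _).trans (hrow' (Classical.arbitrary n))
  rw [linfty_opNorm_def, ← NNReal.coe_mk c hc, NNReal.coe_le_coe]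
  refine Finset.sup_le fun i _ => ?_
  rw [← NNReal.coe_le_coe, NNReal.coe_sum]
  exact hrow' i

theorem norm_inv_one_sub_le {A : Matrix n n ℝ} {δ : ℝ} (hδ : 0 < δ) (hA : ‖A‖ ≤ 1 - δ) :
    ‖(1 - A)⁻¹‖ ≤ δ⁻¹ := by
  have hA1 : ‖A‖ < 1 := by linarith
  rw [nonsing_inv_eq_ringInverse, ← geom_series_eq_inverse A hA1]
  calc ‖∑' i, A ^ i‖ ≤ ‖(1 : Matrix n n ℝ)‖ - 1 + (1 - ‖A‖)⁻¹ :=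
        tsum_geometric_le_of_norm_lt_one A hA1
    _ ≤ δ⁻¹ := by rw [norm_one, sub_self, zero_add]; gcongr; linarith

theorem norm_inv_one_sub_le_of_norm_pow_le {R : Matrix n n ℝ} {l : ℕ} {ε : ℝ} (hε : 0 < ε)
    (hR : ‖R‖ ≤ 1) (hRl : ‖R ^ l‖ ≤ 1 - ε) : ‖(1 - R)⁻¹‖ ≤ l / ε := by
  rw [inv_one_sub_eq_geom_sum_mul (isUnit_one_sub_of_norm_lt_one (by linarith)), div_eq_mul_inv]
  exact (norm_mul_le _ _).trans <| mul_le_mul (norm_geom_sum_le_of_norm_le_one hR l)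
    (norm_inv_one_sub_le hε hRl) (norm_nonneg _) l.cast_nonneg

theorem norm_le_one_of_add_mulVec_one {P Q R : Matrix n n ℝ} (hP : ∀ i j, 0 ≤ P i j)
    (hQ : ∀ i j, 0 ≤ Q i j) (hR : ∀ i j, 0 ≤ R i j) (hsum : (P + Q + R) *ᵥ 1 = 1) :
    ‖R‖ ≤ 1 := by
  refine linfty_opNorm_le_of_nonneg hR fun i => ?_
  have hrow := congrFun hsum i
  simp only [add_apply, sum_add_distrib, Pi.one_apply, mulVec_one_apply] at hrow ⊢
  have hPi : 0 ≤ ∑ j, P i j := sum_nonneg fun j _ => hP i j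
  have hQi : 0 ≤ ∑ j, Q i j := sum_nonneg fun j _ => hQ i j
  linarith

theorem norm_inv_one_sub_mul_le {P Q R : Matrix n n ℝ} {ε : ℝ} (hε : 0 ≤ ε)
    (hR : IsUnit (1 - R)) (hsum : (P + Q + R) *ᵥ 1 = 1)
    (hP : ∀ i j, ε ≤ ((1 - R)⁻¹ * P) i j) (hQ : ∀ i j, 0 ≤ ((1 - R)⁻¹ * Q) i j) :
    ‖(1 - R)⁻¹ * Q‖ ≤ 1 - ε := by
  refine linfty_opNorm_le_of_nonneg hQ fun i => ?_
  have hrow := congrFun (inv_one_sub_mul_add_mulVec_one hR hsum) i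
  simp only [mul_add, add_apply, sum_add_distrib, Pi.one_apply, mulVec_one_apply] at hrow ⊢
  have hPi : ε ≤ ∑ j, ((1 - R)⁻¹ * P) i j :=
    (hP i i).trans (single_le_sum (fun j _ => hε.trans (hP i j)) (mem_univ i))
  linarith

end Norm

end Matrix

theorem rowNorm_eq_norm {m : ℕ} (A : Matrix (Fin m) (Fin m) ℝ) : rowNorm A = ‖A‖ := by
  have hrow : ∀ i, ∑ j, |A i j| = ((∑ j, ‖A i j‖₊ : NNReal) : ℝ) := fun i => by
    simp [Real.norm_eq_abs]
  simp_rw [rowNorm, linfty_opNorm_def, hrow]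
  refine le_antisymm (Real.iSup_le (fun i => ?_) (NNReal.coe_nonneg _)) ?_
  · exact NNReal.coe_le_coe.2 (le_sup (f := fun i => ∑ j, ‖A i j‖₊) (mem_univ i))
  · rcases isEmpty_or_nonempty (Fin m) with _ | _
    · simp [univ_eq_empty]
    obtain ⟨i, -, hi⟩ := exists_mem_eq_sup univ univ_nonempty fun i => ∑ j, ‖A i j‖₊
    rw [hi]
    exact le_ciSup (f := fun i => ((∑ j, ‖A i j‖₊ : NNReal) : ℝ)) (Set.finite_range _).bddAbove i

/-- Under Condition C2, the norm `‖(I - R - Qψ)⁻¹‖` is bounded by a constant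
`C` depending only on `ε`, `l` and `m`, uniformly over stochastic `ψ`. -/
theorem stmt_2 (m l : ℕ) (hl : 1 ≤ l) (ε : ℝ) (hε : 0 < ε) :
    ∃ C : ℝ, 0 < C ∧
      ∀ P Q R : Matrix (Fin m) (Fin m) ℝ,
        (∀ i j, 0 ≤ P i j) → (∀ i j, 0 ≤ Q i j) → (∀ i j, 0 ≤ R i j) →
        ((P + Q + R) *ᵥ (fun _ => (1 : ℝ)) = fun _ => (1 : ℝ)) →
        rowNorm (R ^ l) ≤ 1 - ε →
        (∀ i j, ε ≤ ((1 - R)⁻¹ * P) i j) →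
        (∀ i j, ε ≤ ((1 - R)⁻¹ * Q) i j) →
        ∀ ψ : Matrix (Fin m) (Fin m) ℝ, IsStochastic ψ →
          rowNorm (1 - R - Q * ψ)⁻¹ ≤ C := by
  refine ⟨l / ε ^ 2, by positivity, ?_⟩
  rintro P Q R hP hQ hR (hsum : (P + Q + R) *ᵥ 1 = 1) hRl hWP hWQ ψ ⟨hψ0, hψ1 : ψ *ᵥ 1 = 1⟩
  rcases isEmpty_or_nonempty (Fin m) with _ | _
  · simp only [rowNorm, Real.iSup_of_isEmpty]
    positivity
  rw [rowNorm_eq_norm] at hRl ⊢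
  have hunit : IsUnit (1 - R) :=
    isUnit_one_sub_of_isUnit_one_sub_pow (isUnit_one_sub_of_norm_lt_one (by linarith))
  have hW : ‖(1 - R)⁻¹‖ ≤ l / ε :=
    norm_inv_one_sub_le_of_norm_pow_le hε (norm_le_one_of_add_mulVec_one hP hQ hR hsum) hRl
  have hψ : ‖ψ‖ ≤ 1 := linfty_opNorm_le_of_nonneg hψ0 fun i => (congrFun hψ1 i).le
  have hB : ‖(1 - R)⁻¹ * (Q * ψ)‖ ≤ 1 - ε := by
    rw [← mul_assoc]
    exact (norm_mul_le _ _).trans <| (mul_le_of_le_one_right (norm_nonneg _) hψ).trans <|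
      norm_inv_one_sub_mul_le hε.le hunit hsum hWP fun i j => hε.le.trans (hWQ i j)
  rw [one_sub_sub_eq_one_sub_mul hunit, Matrix.mul_inv_rev]
  calc ‖(1 - (1 - R)⁻¹ * (Q * ψ))⁻¹ * (1 - R)⁻¹‖
      ≤ ‖(1 - (1 - R)⁻¹ * (Q * ψ))⁻¹‖ * ‖(1 - R)⁻¹‖ := norm_mul_le _ _
    _ ≤ ε⁻¹ * (l / ε) := by gcongr; exact norm_inv_one_sub_le hε hB
    _ = l / ε ^ 2 := by ring
end

section
/- Let (X, r) be a compact metric space, let (b_n) and (b_n') be sequences of self-maps of X such that each b_n is a c-contraction for a fixed 0 ≤ c < 1 (r(b_n(x), b_n(y)) ≤ c·r(x,y) for all x,y), and suppose ρ̄(b_n, b_n') := sup_x r(b_n(x), b_n'(x)) → 0 as n → ∞. Define x_{n+1} = b_n(x_n) and x_{n+1}' = b_n'(x_n') from arbitrary initial points x_1, x_1'. Then r(x_n, x_n') → 0 as n → ∞. -/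
/-!
Each step of the perturbed orbit satisfies `d (n+1) ≤ c d n + ρ n`, where `d n` is the distance
of the two orbits and `ρ n` the uniform distance of `b n` and `b' n` (finite because `X` is
bounded). Once `ρ n ≤ (1 - c) e`, the affine map `t ↦ c t + (1 - c) e` contracts everything
towards its fixed point `e`, so `d` is eventually below `2e`; as `e > 0` is arbitrary, `d → 0`.
-/

open Filter Topology

section Recursion

variable {c : ℝ} {d : ℕ → ℝ}

lemma le_pow_sub_mul_add_of_le_mul_add (hc0 : 0 ≤ c) {N : ℕ} {e : ℝ} (he : 0 ≤ e)
    (h : ∀ n ≥ N, d (n + 1) ≤ c * d n + (1 - c) * e) :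
    ∀ n ≥ N, d n ≤ c ^ (n - N) * d N + e := by
  intro n hn
  induction n, hn using Nat.le_induction with
  | base => simpa using he
  | succ n hn ih =>
    rw [show n + 1 - N = n - N + 1 by omega]
    calc d (n + 1) ≤ c * d n + (1 - c) * e := h n hn
      _ ≤ c * (c ^ (n - N) * d N + e) + (1 - c) * e := by gcongr
      _ = c ^ (n - N + 1) * d N + e := by ring

lemma tendsto_zero_of_le_mul_add (hc0 : 0 ≤ c) (hc1 : c < 1) {ρ : ℕ → ℝ}
    (hd : ∀ n, 0 ≤ d n) (hρ : Tendsto ρ atTop (𝓝 0))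
    (hrec : ∀ᶠ n in atTop, d (n + 1) ≤ c * d n + ρ n) : Tendsto d atTop (𝓝 0) := by
  refine tendsto_order.2 ⟨fun a ha => .of_forall fun n => ha.trans_le (hd n), fun ε hε => ?_⟩
  have hδ : 0 < (1 - c) * (ε / 2) := by have := sub_pos.2 hc1; positivity
  obtain ⟨N, hN⟩ := eventually_atTop.1 (hrec.and (hρ.eventually (ge_mem_nhds hδ)))
  have hbound := le_pow_sub_mul_add_of_le_mul_add hc0 (half_pos hε).le fun n hn =>
    (hN n hn).1.trans (by linarith [(hN n hn).2])
  have hpow : Tendsto (fun k => c ^ k * d N + ε / 2) atTop (𝓝 (ε / 2)) := by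
    simpa using ((tendsto_pow_atTop_nhds_zero_of_lt_one hc0 hc1).mul_const (d N)).add_const (ε / 2)
  have hsmall := hpow.eventually (gt_mem_nhds (half_lt_self hε))
  filter_upwards [(tendsto_sub_atTop_nat N).eventually hsmall, eventually_ge_atTop N]
    with n hn_small hn
  exact (hbound n hn).trans_lt hn_small

end Recursion

lemma dist_le_mul_add_iSup_dist {X Y : Type*} [PseudoMetricSpace X] [PseudoMetricSpace Y]
    [BoundedSpace Y] {c : ℝ} {f g : X → Y} (hf : ∀ x y, dist (f x) (f y) ≤ c * dist x y)
    (x y : X) : dist (f x) (g y) ≤ c * dist x y + ⨆ z, dist (f z) (g z) := by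
  obtain ⟨C, hC⟩ := Metric.boundedSpace_iff.1 ‹BoundedSpace Y›
  have hbdd : BddAbove (Set.range fun z => dist (f z) (g z)) :=
    ⟨C, by rintro _ ⟨z, rfl⟩; exact hC _ _⟩
  calc dist (f x) (g y) ≤ dist (f x) (f y) + dist (f y) (g y) := dist_triangle _ _ _
    _ ≤ c * dist x y + ⨆ z, dist (f z) (g z) :=
      add_le_add (hf x y) (le_ciSup hbdd y)

/-- Stability of orbits of uniformly contracting maps on a compact metric
space under perturbations that vanish in the uniform distance. -/
theorem stmt_7 {X : Type*} [MetricSpace X] [CompactSpace X]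
    (c : ℝ) (hc0 : 0 ≤ c) (hc1 : c < 1)
    (b b' : ℕ → X → X)
    (hb : ∀ n x y, dist (b n x) (b n y) ≤ c * dist x y)
    (hρ : Tendsto (fun n => ⨆ x, dist (b n x) (b' n x)) atTop (nhds 0))
    (x x' : ℕ → X)
    (hx : ∀ n, 1 ≤ n → x (n + 1) = b n (x n))
    (hx' : ∀ n, 1 ≤ n → x' (n + 1) = b' n (x' n)) :
    Tendsto (fun n => dist (x n) (x' n)) atTop (nhds 0) := by
  refine tendsto_zero_of_le_mul_add hc0 hc1 (fun _ => dist_nonneg) hρ ?_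
  filter_upwards [eventually_ge_atTop 1] with n hn
  rw [hx n hn, hx' n hn]
  exact dist_le_mul_add_iSup_dist (hb n) _ _
end

section
/- Let (X, r) be a metric space with bounded diameter, (b_n), (b_n') sequences of c-contractions of X with 0 ≤ c < 1, and suppose ρ̄(b_n, b_n') ≤ C₂ c₀^n ρ̄(b_1, b_1') for some C₂ > 0 and 0 ≤ c₀ < 1. Let x_{n+1} = b_n(x_n), x_{n+1}' = b_n'(x_n'). Then for every ε > 0 there is a constant C₃ such that r(x_n, x_n') ≤ C₃ (max(c, c₀) + ε)^n (ρ̄(b_1, b_1') + r(x_1, x_1')) for all n. -/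
/- One step of the two orbits costs a factor `c` on the previous distance plus the perturbation
`ρ̄(b_n, b_n') ≤ C₂ ρ̄(b_1, b_1') c₀ⁿ`. The resulting linear recursion `u_{n+1} ≤ c u_n + M c₀ⁿ`
is dominated by `K qⁿ` with `q = max c c₀ + ε`: the slack `ε K` in `K q ≥ c K + ε K` absorbs
the forcing term as soon as `K ≥ M / ε`. -/

theorem dist_le_mul_dist_add_iSup_dist {X Y : Type*} [PseudoMetricSpace X] [PseudoMetricSpace Y]
    {f g : X → Y} {c : ℝ} (hf : ∀ x y, dist (f x) (f y) ≤ c * dist x y)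
    (hfg : BddAbove (Set.range fun z => dist (f z) (g z))) (x y : X) :
    dist (f x) (g y) ≤ c * dist x y + ⨆ z, dist (f z) (g z) :=
  calc dist (f x) (g y) ≤ dist (f x) (f y) + dist (f y) (g y) := dist_triangle _ _ _
    _ ≤ c * dist x y + ⨆ z, dist (f z) (g z) := add_le_add (hf x y) (le_ciSup hfg y)

theorem le_geometric_of_le_mul_add_geometric {u : ℕ → ℝ} {c c₀ q ε M : ℝ}
    (hc : 0 ≤ c) (hc₀ : 0 ≤ c₀) (hc₀q : c₀ ≤ q) (hcq : c + ε ≤ q) (hε : 0 < ε)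
    (hM : 0 ≤ M) (hu₁ : 0 ≤ u 1)
    (hu : ∀ n, 1 ≤ n → u (n + 1) ≤ c * u n + M * c₀ ^ n) :
    ∀ n, 1 ≤ n → u n ≤ (M + u 1) / ε * q ^ n := by
  set K := (M + u 1) / ε
  have hεK : ε * K = M + u 1 := mul_div_cancel₀ _ hε.ne'
  have hK : 0 ≤ K := by positivity
  have hq : 0 ≤ q := by linarith
  intro n hn
  induction n, hn using Nat.le_induction with
  | base =>
    calc u 1 ≤ ε * K := by linarith
      _ ≤ K * q ^ 1 := by rw [pow_one, mul_comm K]; gcongr; linarith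
  | succ n hn ih =>
    calc u (n + 1) ≤ c * u n + M * c₀ ^ n := hu n hn
      _ ≤ c * (K * q ^ n) + M * q ^ n := by gcongr
      _ ≤ (c + ε) * K * q ^ n := by
          have hsplit : (c + ε) * K * q ^ n = c * (K * q ^ n) + (M + u 1) * q ^ n := by
            rw [← hεK]; ring
          linarith [mul_nonneg hu₁ (pow_nonneg hq n)]
      _ ≤ q * K * q ^ n := by gcongr
      _ = K * q ^ (n + 1) := by ring

theorem stmt_8_general {X : Type*} [MetricSpace X]
    (hbdd : ∃ D : ℝ, ∀ x y : X, dist x y ≤ D)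
    (c c₀ : ℝ) (hc0 : 0 ≤ c) (hc₀0 : 0 ≤ c₀)
    (C₂ : ℝ) (hC₂ : 0 < C₂)
    (b b' : ℕ → X → X)
    (hb : ∀ n x y, dist (b n x) (b n y) ≤ c * dist x y)
    (hρ : ∀ n, (⨆ z, dist (b n z) (b' n z)) ≤
      C₂ * c₀ ^ n * ⨆ z, dist (b 1 z) (b' 1 z))
    (x x' : ℕ → X)
    (hx : ∀ n, 1 ≤ n → x (n + 1) = b n (x n))
    (hx' : ∀ n, 1 ≤ n → x' (n + 1) = b' n (x' n)) :
    ∀ ε > (0 : ℝ), ∃ C₃ : ℝ, ∀ n, 1 ≤ n →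
      dist (x n) (x' n) ≤ C₃ * (max c c₀ + ε) ^ n *
        ((⨆ z, dist (b 1 z) (b' 1 z)) + dist (x 1) (x' 1)) := by
  intro ε hε
  obtain ⟨D, hD⟩ := hbdd
  set ρ₁ := ⨆ z, dist (b 1 z) (b' 1 z)
  have hρ₁ : 0 ≤ ρ₁ := Real.iSup_nonneg fun _ => dist_nonneg
  have hstep : ∀ n, 1 ≤ n →
      dist (x (n + 1)) (x' (n + 1)) ≤ c * dist (x n) (x' n) + C₂ * ρ₁ * c₀ ^ n := by
    intro n hn
    rw [hx n hn, hx' n hn]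
    refine (dist_le_mul_dist_add_iSup_dist (hb n) ⟨D, ?_⟩ _ _).trans ?_
    · rintro _ ⟨z, rfl⟩
      exact hD _ _
    · linarith [hρ n]
  have hgeom := le_geometric_of_le_mul_add_geometric (u := fun n => dist (x n) (x' n))
    (M := C₂ * ρ₁) hc0 hc₀0
    ((le_max_right c c₀).trans (le_add_of_nonneg_right hε.le))
    (add_le_add_left (le_max_left c c₀) ε) hε (by positivity) dist_nonneg hstep
  refine ⟨max C₂ 1 / ε, fun n hn => (hgeom n hn).trans ?_⟩
  have hC : C₂ * ρ₁ + dist (x 1) (x' 1) ≤ max C₂ 1 * (ρ₁ + dist (x 1) (x' 1)) := by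
    nlinarith [le_max_left C₂ 1, le_max_right C₂ 1, dist_nonneg (x := x 1) (y := x' 1)]
  calc (C₂ * ρ₁ + dist (x 1) (x' 1)) / ε * (max c c₀ + ε) ^ n
      ≤ max C₂ 1 * (ρ₁ + dist (x 1) (x' 1)) / ε * (max c c₀ + ε) ^ n := by gcongr
    _ = _ := by ring

/-- Quantitative stability: if the perturbations decay geometrically, so does
the distance between the two orbits, at rate `max(c, c₀) + ε`. -/
theorem stmt_8 {X : Type*} [MetricSpace X]
    (hbdd : ∃ D : ℝ, ∀ x y : X, dist x y ≤ D)
    (c c₀ : ℝ) (hc0 : 0 ≤ c) (hc1 : c < 1) (hc₀0 : 0 ≤ c₀) (hc₀1 : c₀ < 1)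
    (C₂ : ℝ) (hC₂ : 0 < C₂)
    (b b' : ℕ → X → X)
    (hb : ∀ n x y, dist (b n x) (b n y) ≤ c * dist x y)
    (hb' : ∀ n x y, dist (b' n x) (b' n y) ≤ c * dist x y)
    (hρ : ∀ n, (⨆ z, dist (b n z) (b' n z)) ≤
      C₂ * c₀ ^ n * ⨆ z, dist (b 1 z) (b' 1 z))
    (x x' : ℕ → X)
    (hx : ∀ n, 1 ≤ n → x (n + 1) = b n (x n))
    (hx' : ∀ n, 1 ≤ n → x' (n + 1) = b' n (x' n)) :
    ∀ ε > (0 : ℝ), ∃ C₃ : ℝ, ∀ n, 1 ≤ n →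
      dist (x n) (x' n) ≤ C₃ * (max c c₀ + ε) ^ n *
        ((⨆ z, dist (b 1 z) (b' 1 z)) + dist (x 1) (x' 1)) :=
  stmt_8_general hbdd c c₀ hc0 hc₀0 C₂ hC₂ b b' hb hρ x x' hx hx'
end

section
/- Let (g_k)_{k≥1} be an i.i.d. sequence of random continuous self-maps of a compact metric space M with distribution μ, generating the Markov chain y_{k+1} = g_k · y_k with unique invariant probability measure ν. Suppose the contraction property holds: there exist C > 0 and 0 ≤ c < 1 with E[ρ(g_n⋯g_1·y, g_n⋯g_1·y')] ≤ C c^n for all y, y' ∈ M and n ≥ 1. Let A be the Markov operator (A F)(g, z) = ∫ F(g', g·z) μ(dg'). If f is a bounded continuous function on supp(μ) × M such that y ↦ ∫ f(g, y) μ(dg) is Lipschitz and ∫∫ f dμ dν = 0, then the series F = ∑_{k≥0} A^k f converges uniformly to a continuous function solving (I - A)F = f with ∫∫ F dμ dν = 0. -/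
open MeasureTheory Filter BigOperators

/-!
Write `h y = ∫ f (g, y) dμ(g)` and `P φ y = ∫ φ (g y) dμ(g)` for the Markov operator of the chain
on `M`; then `A^(k+1) f (g, z) = P^k h (g z)`. Since `P^k h y = E h (g_k ⋯ g_1 · y)`, the Lipschitz
bound on `h` and the contraction hypothesis bound the oscillation of `P^k h` by `L C c^k`, and
invariance of `ν` gives `∫ P^k h dν = ∫ f d(μ ⊗ ν) = 0`, so `|P^k h| ≤ L C c^k`. The series is thus
dominated by a geometric one, and the Poisson equation and the zero mean pass to the limit by
dominated convergence.
-/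

/-- The Markov operator `(A F)(g, z) = ∫ F(g', g·z) μ(dg')` associated with an
i.i.d. sequence of random continuous self-maps with common law `μ`. -/
noncomputable def Aop {M : Type*} [TopologicalSpace M]
    [MeasurableSpace C(M, M)] (μ : Measure C(M, M))
    (F : C(M, M) × M → ℝ) : C(M, M) × M → ℝ :=
  fun p => ∫ g', F (g', p.1 p.2) ∂μ

/-- Application of a tuple of maps: `g_n ⋯ g_1 · y` (apply `gs 0` first). -/
def applyTuple {M : Type*} [TopologicalSpace M] {n : ℕ}
    (gs : Fin n → C(M, M)) (y : M) : M :=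
  (List.ofFn gs).foldl (fun x g => g x) y

theorem integral_pi_fin_succ {X E : Type*} [MeasurableSpace X] [NormedAddCommGroup E]
    [NormedSpace ℝ E] (μ : Measure X) [SigmaFinite μ] {k : ℕ}
    {ψ : (Fin (k + 1) → X) → E} (hψ : Integrable ψ (Measure.pi fun _ => μ)) :
    ∫ xs, ψ xs ∂(Measure.pi fun _ => μ) =
      ∫ x, ∫ xs, ψ (Fin.cons x xs) ∂(Measure.pi fun _ => μ) ∂μ := by
  have hmp := (measurePreserving_piFinSuccAbove (fun _ : Fin (k + 1) => μ) 0).symm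
  rw [← hmp.integrable_comp_emb (MeasurableEquiv.measurableEmbedding _)] at hψ
  rw [← hmp.integral_comp' ψ]
  refine (integral_prod (fun x => ψ _) hψ).trans ?_
  simp [MeasurableEquiv.piFinSuccAbove_symm_apply, Fin.insertNthEquiv, Fin.insertNth_zero']

theorem hasSum_integral_of_norm_le {α ι E : Type*} [MeasurableSpace α] [Countable ι]
    [NormedAddCommGroup E] [NormedSpace ℝ E] [CompleteSpace E]
    {m : Measure α} [IsFiniteMeasure m] {a : ι → α → E} {u : ι → ℝ} (hu : Summable u)
    (ha : ∀ k, AEStronglyMeasurable (a k) m) (hle : ∀ k x, ‖a k x‖ ≤ u k) :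
    HasSum (fun k => ∫ x, a k x ∂m) (∫ x, ∑' k, a k x ∂m) :=
  hasSum_integral_of_dominated_convergence (fun k _ => u k) ha
    (fun k => ae_of_all _ (hle k)) (ae_of_all _ fun _ => hu) (integrable_const _)
    (ae_of_all _ fun x => (hu.of_norm_bounded (hle · x)).hasSum)

theorem abs_le_of_integral_eq_zero {α : Type*} [MeasurableSpace α] {ν : Measure α}
    [IsProbabilityMeasure ν] {ψ : α → ℝ} (hψ : Integrable ψ ν) (h0 : ∫ y, ψ y ∂ν = 0)
    {ε : ℝ} (hosc : ∀ y y', |ψ y - ψ y'| ≤ ε) (y : α) : |ψ y| ≤ ε := by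
  have hmean : ∫ y', (ψ y - ψ y') ∂ν = ψ y := by
    simp [integral_sub (integrable_const _) hψ, h0]
  rw [← hmean]
  simpa using norm_integral_le_of_norm_le_const (f := fun y' => ψ y - ψ y') (ae_of_all ν (hosc y))

theorem Continuous.integrable_comp_of_compactSpace {X Y : Type*} [TopologicalSpace X]
    [MeasurableSpace X] [OpensMeasurableSpace X] [TopologicalSpace Y] [CompactSpace Y]
    {m : Measure X} [IsFiniteMeasure m] {φ : Y → ℝ} (hφ : Continuous φ) {T : X → Y}
    (hT : Continuous T) : Integrable (fun x => φ (T x)) m :=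
  .of_bound (hφ.comp hT).aestronglyMeasurable ‖(⟨φ, hφ⟩ : C(Y, ℝ))‖
    (ae_of_all _ fun x => ContinuousMap.norm_coe_le_norm ⟨φ, hφ⟩ (T x))

section RandomMaps

variable {M : Type*} [TopologicalSpace M]

theorem applyTuple_succ {n : ℕ} (gs : Fin (n + 1) → C(M, M)) (y : M) :
    applyTuple gs y = applyTuple (Fin.tail gs) (gs 0 y) := by
  simp only [applyTuple, List.ofFn_succ, List.foldl_cons]
  rfl

theorem continuous_applyTuple [LocallyCompactSpace M] (n : ℕ) :
    Continuous fun p : (Fin n → C(M, M)) × M => applyTuple p.1 p.2 := by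
  induction n with
  | zero => simpa [applyTuple] using continuous_snd
  | succ n ih =>
    simp_rw [applyTuple_succ]
    exact ih.comp <| (continuous_pi fun i => (continuous_apply i.succ).comp continuous_fst).prodMk
      (continuous_eval.comp (((continuous_apply 0).comp continuous_fst).prodMk continuous_snd))

theorem continuous_applyTuple_left [LocallyCompactSpace M] (n : ℕ) (y : M) :
    Continuous fun gs : Fin n → C(M, M) => applyTuple gs y :=
  (continuous_applyTuple n).comp (continuous_id.prodMk continuous_const)

variable [MeasurableSpace C(M, M)] (μ : Measure C(M, M))

noncomputable def markovOp (φ : M → ℝ) : M → ℝ := fun y => ∫ g, φ (g y) ∂μ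

noncomputable def fiberAvg (F : C(M, M) × M → ℝ) : M → ℝ := fun y => ∫ g, F (g, y) ∂μ

theorem Aop_iterate_succ_apply (F : C(M, M) × M → ℝ) (k : ℕ) (p : C(M, M) × M) :
    (Aop μ)^[k + 1] F p = (markovOp μ)^[k] (fiberAvg μ F) (p.1 p.2) := by
  have hsemiconj : Function.Semiconj (fiberAvg μ) (Aop μ) (markovOp μ) := fun _ => rfl
  rw [Function.iterate_succ_apply', ← hsemiconj.iterate_right k]
  rfl

theorem tsum_Aop_iterate_sub_Aop [OpensMeasurableSpace C(M, M)] [IsFiniteMeasure μ]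
    {F : C(M, M) × M → ℝ} {u : ℕ → ℝ} (hu : Summable u)
    (hcont : ∀ k, Continuous ((Aop μ)^[k] F)) (hle : ∀ k p, ‖(Aop μ)^[k] F p‖ ≤ u k)
    (p : C(M, M) × M) :
    ∑' k, (Aop μ)^[k] F p - Aop μ (fun q => ∑' k, (Aop μ)^[k] F q) p = F p := by
  have hAop : HasSum (fun k => (Aop μ)^[k + 1] F p)
      (Aop μ (fun q => ∑' k, (Aop μ)^[k] F q) p) := by
    simp only [Function.iterate_succ_apply']
    exact hasSum_integral_of_norm_le hu
      (fun k => ((hcont k).comp (continuous_id.prodMk continuous_const)).aestronglyMeasurable)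
      fun k g => hle k _
  have hshift := (hasSum_nat_add_iff' 1).2 (hu.of_norm_bounded (hle · p)).hasSum
  rw [hAop.unique hshift]
  simp

end RandomMaps

section CompactRandomMaps

variable {M : Type*} [MetricSpace M] [CompactSpace M] [MeasurableSpace C(M, M)]
  [OpensMeasurableSpace C(M, M)] (μ : Measure C(M, M))

theorem continuous_markovOp [IsFiniteMeasure μ] {φ : M → ℝ} (hφ : Continuous φ) :
    Continuous (markovOp μ φ) :=
  continuous_of_dominated
    (fun y => (hφ.comp (continuous_eval_const y)).aestronglyMeasurable)
    (fun y => ae_of_all _ fun g => ContinuousMap.norm_coe_le_norm ⟨φ, hφ⟩ (g y))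
    (integrable_const _) (ae_of_all _ fun g => hφ.comp g.continuous)

theorem continuous_markovOp_iterate [IsFiniteMeasure μ] {φ : M → ℝ} (hφ : Continuous φ)
    (k : ℕ) : Continuous ((markovOp μ)^[k] φ) := by
  induction k with
  | zero => exact hφ
  | succ k ih => simpa only [Function.iterate_succ_apply'] using continuous_markovOp μ ih

theorem markovOp_iterate_apply_eq_integral [IsFiniteMeasure μ] {φ : M → ℝ}
    (hφ : Continuous φ) (k : ℕ) (y : M) :
    (markovOp μ)^[k] φ y = ∫ gs, φ (applyTuple gs y) ∂(Measure.pi fun _ : Fin k => μ) := by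
  induction k generalizing y with
  | zero => simp [applyTuple, Measure.real]
  | succ k ih =>
    rw [integral_pi_fin_succ μ
      (hφ.integrable_comp_of_compactSpace (continuous_applyTuple_left _ y))]
    simp [Function.iterate_succ_apply', markovOp, ih, applyTuple_succ]

theorem abs_markovOp_iterate_sub_le [IsFiniteMeasure μ] {φ : M → ℝ} {L : NNReal}
    (hφ : LipschitzWith L φ) (k : ℕ) (y y' : M) :
    |(markovOp μ)^[k] φ y - (markovOp μ)^[k] φ y'| ≤
      L * ∫ gs, dist (applyTuple gs y) (applyTuple gs y') ∂(Measure.pi fun _ : Fin k => μ) := by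
  have hint : ∀ z, Integrable (fun gs : Fin k → C(M, M) => φ (applyTuple gs z))
      (Measure.pi fun _ => μ) :=
    fun z => hφ.continuous.integrable_comp_of_compactSpace (continuous_applyTuple_left k z)
  rw [markovOp_iterate_apply_eq_integral μ hφ.continuous,
    markovOp_iterate_apply_eq_integral μ hφ.continuous, ← integral_sub (hint y) (hint y'),
    ← integral_const_mul]
  refine (abs_integral_le_integral_abs).trans (integral_mono ((hint y).sub (hint y')).abs ?_ ?_)
  · exact (continuous_dist.integrable_comp_of_compactSpace
      ((continuous_applyTuple_left k y).prodMk (continuous_applyTuple_left k y'))).const_mul _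
  · exact fun gs => by simpa [Real.dist_eq] using hφ.dist_le_mul _ _

theorem continuous_Aop_iterate [IsFiniteMeasure μ] {F : C(M, M) × M → ℝ} (hF : Continuous F)
    (hF_avg : Continuous (fiberAvg μ F)) (k : ℕ) : Continuous ((Aop μ)^[k] F) := by
  cases k with
  | zero => exact hF
  | succ k =>
    rw [funext (Aop_iterate_succ_apply μ F k)]
    exact (continuous_markovOp_iterate μ hF_avg k).comp continuous_eval

variable [MeasurableSpace M] [BorelSpace M] {ν : Measure M}

theorem integral_comp_eval_of_map_eq (hinv : (μ.prod ν).map (fun p : C(M, M) × M => p.1 p.2) = ν)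
    {φ : M → ℝ} (hφ : Continuous φ) :
    ∫ p, φ (p.1 p.2) ∂(μ.prod ν) = ∫ y, φ y ∂ν := by
  conv_rhs => rw [← hinv]
  exact (integral_map continuous_eval.aemeasurable hφ.aestronglyMeasurable).symm

variable [IsProbabilityMeasure μ] [IsProbabilityMeasure ν]

theorem integral_markovOp_iterate (hinv : (μ.prod ν).map (fun p : C(M, M) × M => p.1 p.2) = ν)
    {φ : M → ℝ} (hφ : Continuous φ) (k : ℕ) :
    ∫ y, (markovOp μ)^[k] φ y ∂ν = ∫ y, φ y ∂ν := by
  induction k with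
  | zero => rfl
  | succ k ih =>
    have hφk := continuous_markovOp_iterate μ hφ k
    rw [Function.iterate_succ_apply', ← ih, ← integral_comp_eval_of_map_eq μ hinv hφk,
      integral_prod_symm _ (hφk.integrable_comp_of_compactSpace continuous_eval)]
    rfl

theorem abs_markovOp_iterate_le
    (hinv : (μ.prod ν).map (fun p : C(M, M) × M => p.1 p.2) = ν) {φ : M → ℝ} {L : NNReal}
    (hφ : LipschitzWith L φ) (hmean : ∫ y, φ y ∂ν = 0) {k : ℕ} {δ : ℝ}
    (hδ : ∀ y y', ∫ gs, dist (applyTuple gs y) (applyTuple gs y')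
      ∂(Measure.pi fun _ : Fin k => μ) ≤ δ) (y : M) :
    |(markovOp μ)^[k] φ y| ≤ L * δ :=
  abs_le_of_integral_eq_zero (ψ := (markovOp μ)^[k] φ)
    ((continuous_markovOp_iterate μ hφ.continuous k).integrable_comp_of_compactSpace
      continuous_id)
    (by rw [integral_markovOp_iterate μ hinv hφ.continuous, hmean])
    (fun y y' => (abs_markovOp_iterate_sub_le μ hφ k y y').trans
      (mul_le_mul_of_nonneg_left (hδ y y') L.coe_nonneg)) y

theorem integral_Aop_iterate (hinv : (μ.prod ν).map (fun p : C(M, M) × M => p.1 p.2) = ν)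
    {F : C(M, M) × M → ℝ} (hF : Integrable F (μ.prod ν)) (hF_avg : Continuous (fiberAvg μ F))
    (k : ℕ) : ∫ p, (Aop μ)^[k] F p ∂(μ.prod ν) = ∫ p, F p ∂(μ.prod ν) := by
  cases k with
  | zero => rfl
  | succ k =>
    simp_rw [Aop_iterate_succ_apply]
    rw [integral_comp_eval_of_map_eq μ hinv (continuous_markovOp_iterate μ hF_avg k),
      integral_markovOp_iterate μ hinv hF_avg, integral_prod_symm F hF]
    rfl

end CompactRandomMaps

theorem stmt_10_general {M : Type*} [MetricSpace M] [CompactSpace M]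
    [MeasurableSpace M] [BorelSpace M]
    [MeasurableSpace C(M, M)] [BorelSpace C(M, M)]
    (μ : Measure C(M, M)) [IsProbabilityMeasure μ]
    (ν : Measure M) [IsProbabilityMeasure ν]
    (hinv : (μ.prod ν).map (fun p : C(M, M) × M => p.1 p.2) = ν)
    (C : ℝ) (c : ℝ) (hc0 : 0 ≤ c) (hc1 : c < 1)
    (hcontr : ∀ (n : ℕ) (y y' : M),
      (∫ gs : Fin n → C(M, M), dist (applyTuple gs y) (applyTuple gs y')
        ∂(Measure.pi fun _ => μ)) ≤ C * c ^ n)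
    (f : C(M, M) × M → ℝ) (hfc : Continuous f)
    (hfb : ∃ K : ℝ, ∀ p, |f p| ≤ K)
    (hLip : ∃ L : NNReal, LipschitzWith L (fun y : M => ∫ g, f (g, y) ∂μ))
    (hmean : ∫ p, f p ∂(μ.prod ν) = 0) :
    ∃ F : C(M, M) × M → ℝ, Continuous F ∧
      TendstoUniformly
        (fun (n : ℕ) (p : C(M, M) × M) =>
          ∑ k ∈ Finset.range n, (Aop μ)^[k] f p) F atTop ∧
      (∀ p, F p - Aop μ F p = f p) ∧
      ∫ p, F p ∂(μ.prod ν) = 0 := by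
  obtain ⟨K, hK⟩ := hfb
  obtain ⟨L, hL : LipschitzWith L (fiberAvg μ f)⟩ := hLip
  have hf_int : Integrable f (μ.prod ν) := .of_bound hfc.aestronglyMeasurable K (ae_of_all _ hK)
  have hcont := continuous_Aop_iterate μ hfc hL.continuous
  set u : ℕ → ℝ := fun k => if k = 0 then K else L * (C * c ^ (k - 1))
  have hu : Summable u := (summable_nat_add_iff 1).1 <| by
    simpa [u] using ((summable_geometric_of_lt_one hc0 hc1).mul_left C).mul_left (L : ℝ)
  have hle : ∀ k p, ‖(Aop μ)^[k] f p‖ ≤ u k := by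
    rintro (_ | k) p
    · exact hK p
    · rw [Aop_iterate_succ_apply]
      exact abs_markovOp_iterate_le μ hinv hL
        ((integral_prod_symm f hf_int).symm.trans hmean) (hcontr k) _
  refine ⟨fun p => ∑' k, (Aop μ)^[k] f p, continuous_tsum hcont hu hle,
    tendstoUniformly_tsum_nat hu hle, tsum_Aop_iterate_sub_Aop μ hu hcont hle, ?_⟩
  refine (hasSum_integral_of_norm_le hu (fun k => (hcont k).aestronglyMeasurable) hle).unique ?_
  simp [integral_Aop_iterate μ hinv hf_int hL.continuous, hmean, hasSum_zero]

/-- Solution of the Poisson equation `(I - A)F = f` for contracting iterated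
random maps: the series `∑ₖ Aᵏ f` converges uniformly to a continuous `F` with
zero mean. -/
theorem stmt_10 {M : Type*} [MetricSpace M] [CompactSpace M] [Nonempty M]
    [MeasurableSpace M] [BorelSpace M]
    [MeasurableSpace C(M, M)] [BorelSpace C(M, M)]
    (μ : Measure C(M, M)) [IsProbabilityMeasure μ]
    (ν : Measure M) [IsProbabilityMeasure ν]
    (hinv : (μ.prod ν).map (fun p : C(M, M) × M => p.1 p.2) = ν)
    (huniq : ∀ ν' : Measure M, IsProbabilityMeasure ν' →
      (μ.prod ν').map (fun p : C(M, M) × M => p.1 p.2) = ν' → ν' = ν)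
    (C : ℝ) (hC : 0 < C) (c : ℝ) (hc0 : 0 ≤ c) (hc1 : c < 1)
    (hcontr : ∀ (n : ℕ) (y y' : M),
      (∫ gs : Fin n → C(M, M), dist (applyTuple gs y) (applyTuple gs y')
        ∂(Measure.pi fun _ => μ)) ≤ C * c ^ n)
    (f : C(M, M) × M → ℝ) (hfc : Continuous f)
    (hfb : ∃ K : ℝ, ∀ p, |f p| ≤ K)
    (hLip : ∃ L : NNReal, LipschitzWith L (fun y : M => ∫ g, f (g, y) ∂μ))
    (hmean : ∫ p, f p ∂(μ.prod ν) = 0) :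
    ∃ F : C(M, M) × M → ℝ, Continuous F ∧
      TendstoUniformly
        (fun (n : ℕ) (p : C(M, M) × M) =>
          ∑ k ∈ Finset.range n, (Aop μ)^[k] f p) F atTop ∧
      (∀ p, F p - Aop μ F p = f p) ∧
      ∫ p, F p ∂(μ.prod ν) = 0 :=
  stmt_10_general μ ν hinv C c hc0 hc1 hcontr f hfc hfb hLip hmean
end

section
/- Let g be a self-map of a compact metric space M that is a contraction on M (there exist n ≥ 1 and 0 ≤ c < 1 with ρ(gⁿ·x, gⁿ·x') ≤ c·ρ(x, x') for all x, x'). Then g has a fixed point x_g in M, and if g lies in the support of the driving distribution μ of an i.i.d. iterated-function-system Markov chain y_{k+1} = g_k·y_k with invariant measure ν, then x_g belongs to the support of ν. -/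
/-!
Some iterate `gⁿ` of `g` is a contraction, so its fixed point `x_g` is fixed by `g`, and `gⁿᵏ` maps
all of `M` into an arbitrarily small ball around `x_g`. By uniform continuity, any composition of
`nk` maps that are uniformly `δ`-close to `g` does the same, and `μ` gives such maps positive mass.
Invariance of `ν` gives `ν S ≥ μ(A) · ν{y | f y ∈ S for all f ∈ A}`; iterating `nk` times, the
ball around `x_g` has `ν`-measure at least `μ(A)ⁿᵏ > 0`.
-/

open MeasureTheory Metric Set Function

/-- `(forallPreimage A)^[m] S` consists of the points that every composition of `m` maps from `A`
sends into `S`. -/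
def forallPreimage {X E : Type*} [FunLike E X X] (A : Set E) (S : Set X) : Set X :=
  {x | ∀ f ∈ A, f x ∈ S}

section Invariance

variable {X E : Type*} [MeasurableSpace X] [MeasurableSpace E] [FunLike E X X]
  {μ : Measure E} {ν : Measure X} [SFinite ν]

theorem measure_mul_measure_forallPreimage_le
    (hinv : (μ.prod ν).map (fun p : E × X => p.1 p.2) = ν) (A : Set E) (S : Set X) :
    μ A * ν (forallPreimage A S) ≤ ν S := by
  by_cases hν : ν = 0
  · simp [hν]
  have hev : AEMeasurable (fun p : E × X => p.1 p.2) (μ.prod ν) := .of_map_ne_zero (by rwa [hinv])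
  calc μ A * ν (forallPreimage A S) = μ.prod ν (A ×ˢ forallPreimage A S) :=
        (Measure.prod_prod _ _).symm
    _ ≤ μ.prod ν ((fun p : E × X => p.1 p.2) ⁻¹' S) := measure_mono fun p hp => hp.2 _ hp.1
    _ ≤ ν S := (Measure.le_map_apply hev S).trans_eq (by rw [hinv])

theorem pow_mul_measure_iterate_forallPreimage_le
    (hinv : (μ.prod ν).map (fun p : E × X => p.1 p.2) = ν) (A : Set E) (S : Set X) (m : ℕ) :
    μ A ^ m * ν ((forallPreimage A)^[m] S) ≤ ν S := by
  induction m with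
  | zero => simp
  | succ m ih =>
    calc μ A ^ (m + 1) * ν ((forallPreimage A)^[m + 1] S)
        = μ A ^ m * (μ A * ν (forallPreimage A ((forallPreimage A)^[m] S))) := by
          rw [iterate_succ_apply', pow_succ, mul_assoc]
      _ ≤ μ A ^ m * ν ((forallPreimage A)^[m] S) := by
          gcongr; exact measure_mul_measure_forallPreimage_le hinv _ _
      _ ≤ ν S := ih

theorem pos_measure_of_iterate_forallPreimage_eq_univ [IsProbabilityMeasure ν]
    (hinv : (μ.prod ν).map (fun p : E × X => p.1 p.2) = ν) {A : Set E} {S : Set X} {m : ℕ}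
    (hA : 0 < μ A) (hS : (forallPreimage A)^[m] S = univ) : 0 < ν S :=
  calc 0 < μ A ^ m := ENNReal.pow_pos hA m
    _ = μ A ^ m * ν ((forallPreimage A)^[m] S) := by rw [hS, measure_univ, mul_one]
    _ ≤ ν S := pow_mul_measure_iterate_forallPreimage_le hinv A S m

end Invariance

theorem exists_forall_mem_iterate_forallPreimage {M E : Type*} [PseudoMetricSpace M]
    [FunLike E M M] {g : M → M} (hg : UniformContinuous g) (m : ℕ) {ε : ℝ} (hε : 0 < ε) :
    ∃ δ > 0, ∀ A : Set E, A ⊆ {f | ∀ x, dist (f x) (g x) < δ} →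
      ∀ (S : Set M) (y : M), ball (g^[m] y) ε ⊆ S → y ∈ (forallPreimage A)^[m] S := by
  induction m generalizing ε with
  | zero => exact ⟨1, one_pos, fun A _ S y hS => hS (mem_ball_self hε)⟩
  | succ m ih =>
    obtain ⟨δ₁, hδ₁, hgm⟩ := uniformContinuous_iff.mp (UniformContinuous.iterate g m hg) (ε / 2) (half_pos hε)
    obtain ⟨δ₂, hδ₂, hA⟩ := ih (half_pos hε)
    refine ⟨min δ₁ δ₂, lt_min hδ₁ hδ₂, fun A hAδ S y hS => ?_⟩
    rw [iterate_succ_apply']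
    intro f hf
    refine hA A (hAδ.trans fun f' hf' x => (hf' x).trans_le (min_le_right _ _)) _ _
      fun z hz => hS ?_
    have hfy : dist (g^[m] (f y)) (g^[m + 1] y) < ε / 2 := by
      rw [iterate_succ_apply]
      exact hgm ((hAδ hf y).trans_le (min_le_left _ _))
    rw [mem_ball] at hz ⊢
    linarith [dist_triangle z (g^[m] (f y)) (g^[m + 1] y)]

theorem ContractingWith.exists_forall_dist_iterate_fixedPoint_lt {α : Type*} [MetricSpace α]
    [Nonempty α] [CompleteSpace α] [BoundedSpace α] {K : NNReal} {f : α → α}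
    (hf : ContractingWith K f) {ε : ℝ} (hε : 0 < ε) :
    ∃ k, ∀ y, dist (f^[k] y) (fixedPoint f hf) < ε := by
  set x := fixedPoint f hf
  have hK : Filter.Tendsto (fun k => (K : ℝ) ^ k * diam (univ : Set α)) Filter.atTop (nhds 0) := by
    simpa using (tendsto_pow_atTop_nhds_zero_of_lt_one K.2 hf.1).mul_const (diam (univ : Set α))
  obtain ⟨k, hk⟩ := (hK.eventually_lt_const hε).exists
  refine ⟨k, fun y => ?_⟩
  calc dist (f^[k] y) x = dist (f^[k] y) (f^[k] x) := by rw [hf.fixedPoint_isFixedPt.iterate k]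
    _ ≤ (K : ℝ) ^ k * dist y x := by
        simpa using (hf.toLipschitzWith.iterate k).dist_le_mul y x
    _ ≤ (K : ℝ) ^ k * diam (univ : Set α) := by
        gcongr; exact dist_le_diam_of_mem BoundedSpace.bounded_univ (mem_univ _) (mem_univ _)
    _ < ε := hk

theorem stmt_11_general {M : Type*} [MetricSpace M] [CompactSpace M] [Nonempty M]
    [MeasurableSpace M] [MeasurableSpace C(M, M)]
    (g : C(M, M)) (n : ℕ)
    (c : ℝ) (hc0 : 0 ≤ c) (hc1 : c < 1)
    (hcontr : ∀ x x' : M, dist ((⇑g)^[n] x) ((⇑g)^[n] x') ≤ c * dist x x')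
    (μ : Measure C(M, M)) [IsProbabilityMeasure μ]
    (hsupp : ∀ ε > (0 : ℝ), 0 < μ {g' : C(M, M) | ∀ x, dist (g' x) (g x) < ε})
    (ν : Measure M) [IsProbabilityMeasure ν]
    (hinv : (μ.prod ν).map (fun p : C(M, M) × M => p.1 p.2) = ν) :
    ∃ x_g : M, g x_g = x_g ∧
      ∀ U : Set M, IsOpen U → x_g ∈ U → 0 < ν U := by
  have hgn : ContractingWith ⟨c, hc0⟩ (⇑g)^[n] :=
    ⟨by exact_mod_cast hc1, .of_dist_le_mul hcontr⟩
  set x := hgn.fixedPoint (⇑g)^[n]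
  refine ⟨x, hgn.isFixedPt_fixedPoint_iterate, fun U hU hxU => ?_⟩
  obtain ⟨ε, hε, hball⟩ := isOpen_iff.mp hU x hxU
  obtain ⟨k, hk⟩ := hgn.exists_forall_dist_iterate_fixedPoint_lt (half_pos hε)
  obtain ⟨δ, hδ, hδA⟩ := exists_forall_mem_iterate_forallPreimage (E := C(M, M))
    (CompactSpace.uniformContinuous_of_continuous g.continuous) (n * k) (half_pos hε)
  have hcover : (forallPreimage {f : C(M, M) | ∀ x, dist (f x) (g x) < δ})^[n * k] (ball x ε)
      = univ := by
    refine eq_univ_of_forall fun y => hδA _ subset_rfl _ y fun z hz => ?_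
    rw [mem_ball, iterate_mul] at hz
    rw [mem_ball]
    linarith [dist_triangle z (((⇑g)^[n])^[k] y) x, hk y]
  exact (pos_measure_of_iterate_forallPreimage_eq_univ hinv (hsupp δ hδ) hcover).trans_le
    (measure_mono hball)

/-- A contracting map in the support of the driving distribution of an
iterated-function-system Markov chain has a fixed point, and this fixed point
lies in the support of every invariant measure `ν` of the chain. -/
theorem stmt_11 {M : Type*} [MetricSpace M] [CompactSpace M] [Nonempty M]
    [MeasurableSpace M] [BorelSpace M] [MeasurableSpace C(M, M)]
    (g : C(M, M)) (n : ℕ) (hn : 1 ≤ n)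
    (c : ℝ) (hc0 : 0 ≤ c) (hc1 : c < 1)
    (hcontr : ∀ x x' : M, dist ((⇑g)^[n] x) ((⇑g)^[n] x') ≤ c * dist x x')
    (μ : Measure C(M, M)) [IsProbabilityMeasure μ]
    (hsupp : ∀ ε > (0 : ℝ), 0 < μ {g' : C(M, M) | ∀ x, dist (g' x) (g x) < ε})
    (ν : Measure M) [IsProbabilityMeasure ν]
    (hinv : (μ.prod ν).map (fun p : C(M, M) × M => p.1 p.2) = ν) :
    ∃ x_g : M, g x_g = x_g ∧
      ∀ U : Set M, IsOpen U → x_g ∈ U → 0 < ν U :=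
  stmt_11_general g n c hc0 hc1 hcontr μ hsupp ν hinv
end

section
/- Let M₀ be a minimal set for a semigroup B of Lipschitz self-maps of a compact metric space M (i.e., the orbit {g·x : g ∈ B} of every x ∈ M₀ is dense in M₀). Suppose some ĝ ∈ B is a contraction on M₀ with contraction constant c < 1 and fixed point x̂ ∈ M₀. Then the set of fixed points in M₀ of elements of B, Fix_{M₀}(B) = {x ∈ M₀ : ∃ g ∈ B, g·x = x}, is dense in M₀. -/
/-!
Fix `g ∈ S` and let `ĝ` contract `M₀` with fixed point `x̂`. For large `n` the map `g ∘ ĝⁿ`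
contracts `M₀` with constant `k = L_g cⁿ < 1`, and since `x̂` is fixed by `ĝⁿ` its image under
`g ∘ ĝⁿ` is `g x̂`. The a priori estimate of the Banach fixed point theorem places the fixed
point of `g ∘ ĝⁿ` within `k / (1 - k) · dist x̂ (g x̂)` of `g x̂`, and this tends to `0`. Hence
the orbit of `x̂` lies in the closure of the fixed points, and the orbit is dense in `M₀`.
-/

open scoped NNReal
open Set Filter Function Topology

theorem comp_iterate_mem {α : Type*} {S : Set (α → α)}
    (hS : ∀ g ∈ S, ∀ h ∈ S, g ∘ h ∈ S) {g f : α → α} (hg : g ∈ S) (hf : f ∈ S) :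
    ∀ n, g ∘ f^[n] ∈ S
  | 0 => hg
  | n + 1 => by
    rw [iterate_succ, ← comp_assoc]
    exact hS _ (comp_iterate_mem hS hg hf n) _ hf

section

variable {X : Type*} [MetricSpace X] {f g : X → X} {K L : ℝ≥0}

theorem mem_closure_fixedPoints_comp_iterate [CompleteSpace X]
    (hg : LipschitzWith L g) (hf : LipschitzWith K f) (hK : K < 1) {x : X} (hx : IsFixedPt f x) :
    g x ∈ closure {p | ∃ n, IsFixedPt (g ∘ f^[n]) p} := by
  have : Nonempty X := ⟨x⟩
  rw [Metric.mem_closure_iff]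
  intro ε hε
  have hk : Tendsto (fun n : ℕ => (L : ℝ) * K ^ n) atTop (𝓝 0) := by
    simpa using (tendsto_pow_atTop_nhds_zero_of_lt_one K.coe_nonneg hK).const_mul (L : ℝ)
  have hbound : Tendsto (fun n : ℕ => dist x (g x) * ((L : ℝ) * K ^ n) / (1 - L * K ^ n))
      atTop (𝓝 0) := by
    have h := (hk.const_mul (dist x (g x))).div
      ((tendsto_const_nhds (x := (1 : ℝ))).sub hk) (by norm_num)
    rwa [mul_zero, zero_div] at h
  obtain ⟨n, hsmall, hk1⟩ :=
    ((hbound.eventually (gt_mem_nhds hε)).and (hk.eventually (gt_mem_nhds one_pos))).exists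
  have hC : ContractingWith (L * K ^ n) (g ∘ f^[n]) :=
    ⟨by exact_mod_cast hk1, hg.comp (hf.iterate n)⟩
  refine ⟨hC.fixedPoint, ⟨n, hC.fixedPoint_isFixedPt⟩, lt_of_le_of_lt ?_ hsmall⟩
  simpa [(hx.iterate n).eq] using hC.apriori_dist_iterate_fixedPoint_le x 1

theorem mem_closure_fixedPoints_comp_iterate_of_mapsTo {s : Set X} (hs : IsComplete s)
    (hgs : MapsTo g s s) (hfs : MapsTo f s s) (hg : LipschitzOnWith L g s)
    (hf : LipschitzOnWith K f s) (hK : K < 1) {x : X} (hxs : x ∈ s) (hx : IsFixedPt f x) :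
    g x ∈ closure {p | p ∈ s ∧ ∃ n, IsFixedPt (g ∘ f^[n]) p} := by
  have : CompleteSpace s := hs.completeSpace_coe
  have hmem := mem_closure_fixedPoints_comp_iterate (hg.mapsToRestrict hgs)
    (hf.mapsToRestrict hfs) hK (x := ⟨x, hxs⟩) (Subtype.ext hx)
  have hval := map_mem_closure continuous_subtype_val hmem (mapsTo_image _ _)
  refine closure_mono ?_ hval
  rintro _ ⟨p, ⟨n, hn⟩, rfl⟩
  refine ⟨p.2, n, ?_⟩
  simpa [IsFixedPt, hfs.iterate_restrict] using congrArg Subtype.val hn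

end

theorem stmt_12_general {M : Type*} [MetricSpace M] [CompactSpace M]
    (S : Set (M → M))
    (hsemigroup : ∀ g ∈ S, ∀ h ∈ S, g ∘ h ∈ S)
    (hLip : ∀ g ∈ S, ∃ L : ℝ≥0, LipschitzWith L g)
    (M₀ : Set M) (hM₀closed : IsClosed M₀)
    (hinvar : ∀ g ∈ S, ∀ x ∈ M₀, g x ∈ M₀)
    (hmin : ∀ x ∈ M₀, M₀ ⊆ closure {y | ∃ g ∈ S, g x = y})
    (g0 : M → M) (hg0 : g0 ∈ S)
    (c : ℝ) (hc0 : 0 ≤ c) (hc1 : c < 1)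
    (hcontr : ∀ x ∈ M₀, ∀ y ∈ M₀, dist (g0 x) (g0 y) ≤ c * dist x y)
    (xhat : M) (hxhat : xhat ∈ M₀) (hfix : g0 xhat = xhat) :
    M₀ ⊆ closure {x | x ∈ M₀ ∧ ∃ g ∈ S, g x = x} := by
  have hg0Lip : LipschitzOnWith c.toNNReal g0 M₀ :=
    LipschitzOnWith.of_dist_le_mul fun x hx y hy => by
      simpa [Real.coe_toNNReal c hc0] using hcontr x hx y hy
  have horbit : {y | ∃ g ∈ S, g xhat = y} ⊆ closure {x | x ∈ M₀ ∧ ∃ g ∈ S, g x = x} := by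
    rintro _ ⟨g, hg, rfl⟩
    obtain ⟨L, hL⟩ := hLip g hg
    refine closure_mono ?_ <| mem_closure_fixedPoints_comp_iterate_of_mapsTo
      hM₀closed.isComplete (hinvar g hg) (hinvar g0 hg0) hL.lipschitzOnWith hg0Lip
      (Real.toNNReal_lt_one.mpr hc1) hxhat hfix
    rintro p ⟨hp, n, hn⟩
    exact ⟨hp, g ∘ g0^[n], comp_iterate_mem hsemigroup hg hg0 n, hn⟩
  exact fun z hz => closure_minimal horbit isClosed_closure (hmin xhat hxhat hz)

/-- In a minimal set `M₀` for a semigroup `S` of Lipschitz self-maps of a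
compact metric space, if some element of `S` contracts `M₀`, then fixed
points of elements of `S` are dense in `M₀`. -/
theorem stmt_12 {M : Type*} [MetricSpace M] [CompactSpace M]
    (S : Set (M → M))
    (hsemigroup : ∀ g ∈ S, ∀ h ∈ S, g ∘ h ∈ S)
    (hLip : ∀ g ∈ S, ∃ L : ℝ≥0, LipschitzWith L g)
    (M₀ : Set M) (hM₀closed : IsClosed M₀) (hM₀ne : M₀.Nonempty)
    (hinvar : ∀ g ∈ S, ∀ x ∈ M₀, g x ∈ M₀)
    (hmin : ∀ x ∈ M₀, M₀ ⊆ closure {y | ∃ g ∈ S, g x = y})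
    (g0 : M → M) (hg0 : g0 ∈ S)
    (c : ℝ) (hc0 : 0 ≤ c) (hc1 : c < 1)
    (hcontr : ∀ x ∈ M₀, ∀ y ∈ M₀, dist (g0 x) (g0 y) ≤ c * dist x y)
    (xhat : M) (hxhat : xhat ∈ M₀) (hfix : g0 xhat = xhat) :
    M₀ ⊆ closure {x | x ∈ M₀ ∧ ∃ g ∈ S, g x = x} :=
  stmt_12_general S hsemigroup hLip M₀ hM₀closed hinvar hmin g0 hg0 c hc0 hc1 hcontr xhat hxhat hfix
end
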